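/- For n = 2m, the matrices Φ_{p,q}(e_i) satisfy the Clifford relations Φ_{p,q}(e_i)Φ_{p,q}(e_j) + Φ_{p,q}(e_j)Φ_{p,q}(e_i) = −2⟨e_i,e_j⟩_{p,q}·Id for all i,j, and the induced algebra homomorphism from the complexified Clifford algebra Cl^ℂ_{p,q} to the matrix algebra M_{2^m}(ℂ) is an isomorphism of complex algebras. -/

import Mathlib

/-!
In each tensor factor, `g₁` and `g₂` square to `-1` and anticommute with each other and with `T`,
while `T² = 1`; two distinct `Φ(e_i)` therefore anticommute in exactly one factor and commute in
all others, which gives the Clifford relations, and Clifford multiplication lifts to an algebra map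
`F` on `Cl^ℂ_{p,q}`. Since `g₁ g₂ = -i T`, the image of `F` contains `T` in every single factor, hence
every string of `T`s, and multiplying `Φ(e_i)` by such a string isolates `g₁` or `g₂` in one
factor. As `g₁, g₂` generate `M₂(ℂ)`, the image contains all Kronecker products, i.e. all of
`M_{2^m}(ℂ)`. Both algebras have dimension `2ⁿ` (the Clifford algebra being linearly isomorphic to
the exterior algebra), so the surjection `F` is an isomorphism.
-/

open Complex Matrix

namespace Paper

noncomputable section

/-- The 2×2 generator matrices of Remark 2.1. -/
def matE : Matrix (Fin 2) (Fin 2) ℂ := 1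
def matT : Matrix (Fin 2) (Fin 2) ℂ := !![-1, 0; 0, 1]
def matG1 : Matrix (Fin 2) (Fin 2) ℂ := !![0, Complex.I; Complex.I, 0]
def matG2 : Matrix (Fin 2) (Fin 2) ℂ := !![0, -1; 1, 0]

/-- Iterated Kronecker product of 2×2 matrices, realised on the index type `Fin m → Fin 2`
(the slot `ν` corresponds to the `(ν+1)`-st label of the basis spinors `u(ε₁,…,ε_m)`,
i.e. the Kronecker factors are taken from right to left). -/
def tprod {m : ℕ} (M : Fin m → Matrix (Fin 2) (Fin 2) ℂ) :
    Matrix (Fin m → Fin 2) (Fin m → Fin 2) ℂ :=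
  Matrix.of fun a b => ∏ ν, M ν (a ν) (b ν)

/-- `τ_j = 1` if `ε_j = 1` and `τ_j = i` if `ε_j = -1`. -/
def tau {n : ℕ} (ε : Fin n → ℝ) (j : Fin n) : ℂ := if ε j = 1 then 1 else Complex.I

/-- The matrices `Φ_{p,q}(e_i)` of the explicit Clifford representation of Remark 2.1
(0-based index `i`; the paper's `e_{2j-1}` resp. `e_{2j}` correspond to `i = 2j-2` resp.
`i = 2j-1`, acting by `g₁` resp. `g₂` in slot `j-1`, by `T` in the lower slots and by `E`
in the higher slots).  For odd `n` the last matrix is the first component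
`pr₁ ∘ Φ̃ (e_n) = τ_n · (i T ⊗ ⋯ ⊗ T)`. -/
def Phi {n : ℕ} (ε : Fin n → ℝ) (i : Fin n) :
    Matrix (Fin (n / 2) → Fin 2) (Fin (n / 2) → Fin 2) ℂ :=
  tau ε i •
    if i.val < 2 * (n / 2) then
      tprod fun ν : Fin (n / 2) =>
        if ν.val < i.val / 2 then matT
        else if ν.val = i.val / 2 then (if i.val % 2 = 0 then matG1 else matG2)
        else matE
    else Complex.I • tprod fun _ : Fin (n / 2) => matT

/-- The spinor module `Δ_{p,q} = ℂ^{2^{⌊n/2⌋}}`. -/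
abbrev Spinor (n : ℕ) := (Fin (n / 2) → Fin 2) → ℂ

/-- Clifford multiplication by a real vector, as a matrix. -/
def cliffR {n : ℕ} (ε : Fin n → ℝ) (x : Fin n → ℝ) :
    Matrix (Fin (n / 2) → Fin 2) (Fin (n / 2) → Fin 2) ℂ :=
  ∑ i, (x i : ℂ) • Phi ε i

/-- Clifford multiplication by a complex vector (complex-bilinear extension). -/
def cliffC {n : ℕ} (ε : Fin n → ℝ) (x : Fin n → ℂ) :
    Matrix (Fin (n / 2) → Fin 2) (Fin (n / 2) → Fin 2) ℂ :=
  ∑ i, x i • Phi ε i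

/-- The scalar product `⟨x,y⟩_{p,q} = ∑ ε_i x_i y_i` on `ℝⁿ`. -/
def ipR {n : ℕ} (ε : Fin n → ℝ) (x y : Fin n → ℝ) : ℝ := ∑ i, ε i * x i * y i

/-- Its complex-bilinear extension to `ℂⁿ`. -/
def ipC {n : ℕ} (ε : Fin n → ℝ) (x y : Fin n → ℂ) : ℂ := ∑ i, (ε i : ℂ) * x i * y i

/-- The standard Hermitian scalar product on the spinor module. -/
def stdInner {n : ℕ} (u v : Spinor n) : ℂ := ∑ b, (starRingEnd ℂ) (u b) * v b

/-- Clifford multiplication by the product `e_{i₁} ⋯ e_{i_k}` over a set of indices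
`s = {i₁ < … < i_k}`, taken in increasing order. -/
def cliffSet {n : ℕ} (ε : Fin n → ℝ) (s : Finset (Fin n)) :
    Matrix (Fin (n / 2) → Fin 2) (Fin (n / 2) → Fin 2) ℂ :=
  ((s.sort (· ≤ ·)).map (Phi ε)).prod

/-- The set of indices with `ε_i = -1`. -/
def negSet {n : ℕ} (ε : Fin n → ℝ) : Finset (Fin n) := Finset.univ.filter fun i => ε i = -1

/-- The indefinite spinor inner product `⟨u,v⟩_Δ = d · (e_{i₁} ⋯ e_{i_p} · u, v)`,
where `i₁ < … < i_p` are the indices with `ε = -1`. -/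
def sform {n : ℕ} (ε : Fin n → ℝ) (d : ℂ) (u v : Spinor n) : ℂ :=
  d * stdInner ((cliffSet ε (negSet ε)).mulVec u) v

/-- The coefficient `d_{k,p} · ε_{i₁} ⋯ ε_{i_k} · ⟨e_{i₁} ⋯ e_{i_k} · χ, χ⟩_Δ` of the
algebraic Dirac form (`dD` is the constant of the spinor inner product, `dk` is `d_{k,p}`). -/
def dCoeff {n : ℕ} (ε : Fin n → ℝ) (dD dk : ℂ) (s : Finset (Fin n)) (χ : Spinor n) : ℂ :=
  dk * (∏ i ∈ s, (ε i : ℂ)) * sform ε dD ((cliffSet ε s).mulVec χ) χ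

/-- The covector `X^♭ = ⟨X,·⟩_{p,q}`. -/
def flat {n : ℕ} (ε : Fin n → ℝ) (X : Fin n → ℝ) : (Fin n → ℝ) →ₗ[ℝ] ℝ :=
  ∑ i, (ε i * X i) • LinearMap.proj i

/-- The wedge product of `k` one-forms, as an alternating `k`-form. -/
def wedge1 {n k : ℕ} (f : Fin k → ((Fin n → ℝ) →ₗ[ℝ] ℝ)) :
    AlternatingMap ℝ (Fin n → ℝ) ℝ (Fin k) :=
  (Matrix.detRowAlternating : AlternatingMap ℝ (Fin k → ℝ) ℝ (Fin k)).compLinearMap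
    (LinearMap.pi f)

/-- The algebraic Dirac `k`-form
`α^k_χ = d_{k,p} ∑_{i₁<⋯<i_k} ε_{i₁}⋯ε_{i_k} ⟨e_{i₁}⋯e_{i_k}·χ, χ⟩_Δ e^♭_{i₁} ∧ ⋯ ∧ e^♭_{i_k}`
(a real form; the coefficients are real by the choice of the constant `dk = d_{k,p}`). -/
def diracForm {n : ℕ} (ε : Fin n → ℝ) (dD dk : ℂ) (k : ℕ) (χ : Spinor n) :
    AlternatingMap ℝ (Fin n → ℝ) ℝ (Fin k) :=
  ∑ s : Finset (Fin n),
    if h : s.card = k then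
      (dCoeff ε dD dk s χ).re •
        wedge1 fun j => flat ε (Pi.single (s.orderEmbOfFin h j) 1)
    else 0

/-- The wedge product of `j` one-forms with a `(p-j)`-form, as an alternating `p`-form. -/
def wedgeMix {n p j : ℕ} (h : j ≤ p) (f : Fin j → ((Fin n → ℝ) →ₗ[ℝ] ℝ))
    (β : AlternatingMap ℝ (Fin n → ℝ) ℝ (Fin (p - j))) :
    AlternatingMap ℝ (Fin n → ℝ) ℝ (Fin p) :=
  AlternatingMap.domDomCongr (finSumFinEquiv.trans (finCongr (by omega)))
    ((TensorProduct.lid ℝ ℝ).toLinearMap.compAlternatingMap ((wedge1 f).domCoprod β))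

/-- The basis spinor `u(ε₁,…,ε_m)` (encoded by `a : Fin m → Fin 2`, where `a ν = 0`
corresponds to the label `ε_{ν+1} = 1` and `a ν = 1` to `ε_{ν+1} = -1`). -/
def uB (n : ℕ) (a : Fin (n / 2) → Fin 2) : Spinor n := fun b => if b = a then 1 else 0

end

end Paper
namespace Paper

/-- The complexified Clifford algebra `Cl^ℂ_{p,q}`: the Clifford algebra over `ℂ` of the
quadratic form `Q(x) = -⟨x,x⟩_{p,q} = -∑ ε_i x_i²` on `ℂⁿ`. -/
noncomputable def Qc {n : ℕ} (ε : Fin n → ℝ) : QuadraticForm ℂ (Fin n → ℂ) :=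
  QuadraticMap.weightedSumSquares ℂ (fun i => -(ε i : ℂ))

end Paper

namespace CliffordAlgebra

variable {R M : Type*} [CommRing R] [Invertible (2 : R)] [AddCommGroup M] [Module R M]
  (Q : QuadraticForm R M)

noncomputable def basisOfBasis {ι : Type*} [LinearOrder ι] (b : Module.Basis ι R M) :
    Module.Basis (Finset ι) R (CliffordAlgebra Q) :=
  b.ExteriorAlgebra.map (equivExterior Q).symm

variable [StrongRankCondition R] [Module.Free R M] [Module.Finite R M]

instance : Module.Finite R (CliffordAlgebra Q) :=
  .of_basis (basisOfBasis Q (Module.finBasis R M))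

theorem finrank_eq_two_pow : Module.finrank R (CliffordAlgebra Q) = 2 ^ Module.finrank R M := by
  rw [Module.finrank_eq_card_basis (basisOfBasis Q (Module.finBasis R M)), Fintype.card_finset,
    Fintype.card_fin]

end CliffordAlgebra

theorem Finset.sum_mul_sum_self_of_anticomm {ι A : Type*} [NonUnitalNonAssocSemiring A]
    [DecidableEq ι] (s : Finset ι) (v : ι → A)
    (hv : ∀ i ∈ s, ∀ j ∈ s, i ≠ j → v i * v j + v j * v i = 0) :
    (∑ i ∈ s, v i) * (∑ i ∈ s, v i) = ∑ i ∈ s, v i * v i := by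
  induction s using Finset.induction_on with
  | empty => simp
  | insert a s ha ih =>
    have hcross : v a * ∑ i ∈ s, v i + (∑ i ∈ s, v i) * v a = 0 := by
      rw [Finset.mul_sum, Finset.sum_mul, ← Finset.sum_add_distrib]
      exact Finset.sum_eq_zero fun j hj =>
        hv a (mem_insert_self a s) j (mem_insert_of_mem hj) (ne_of_mem_of_not_mem hj ha).symm
    rw [sum_insert ha, sum_insert ha,
      ← ih fun i hi j hj => hv i (mem_insert_of_mem hi) j (mem_insert_of_mem hj)]
    calc (v a + ∑ i ∈ s, v i) * (v a + ∑ i ∈ s, v i)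
        = v a * v a + (v a * ∑ i ∈ s, v i + (∑ i ∈ s, v i) * v a)
            + (∑ i ∈ s, v i) * (∑ i ∈ s, v i) := by
          simp only [add_mul, mul_add]; abel
      _ = _ := by rw [hcross, add_zero]

namespace Paper

section TwoByTwo

lemma matT_mul_self : matT * matT = 1 := by
  ext i j; fin_cases i <;> fin_cases j <;> simp [matT]

lemma matG1_mul_self : matG1 * matG1 = -1 := by
  ext i j; fin_cases i <;> fin_cases j <;> simp [matG1]

lemma matG2_mul_self : matG2 * matG2 = -1 := by
  ext i j; fin_cases i <;> fin_cases j <;> simp [matG2]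

lemma matG1_mul_matG2 : matG1 * matG2 = -Complex.I • matT := by
  ext i j; fin_cases i <;> fin_cases j <;> simp [matG1, matG2, matT]

lemma matG2_mul_matG1 : matG2 * matG1 = -(matG1 * matG2) := by
  ext i j; fin_cases i <;> fin_cases j <;> simp [matG1, matG2]

lemma matG1_mul_matT : matG1 * matT = -(matT * matG1) := by
  ext i j; fin_cases i <;> fin_cases j <;> simp [matG1, matT]

lemma matG2_mul_matT : matG2 * matT = -(matT * matG2) := by
  ext i j; fin_cases i <;> fin_cases j <;> simp [matG2, matT]

lemma adjoin_matG1_matG2 : Algebra.adjoin ℂ {matG1, matG2} = ⊤ := by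
  refine Algebra.eq_top_iff.mpr fun B => ?_
  have hB : B = ((B 0 0 + B 1 1) / 2) • 1 + (-Complex.I * (B 0 1 + B 1 0) / 2) • matG1
      + ((B 1 0 - B 0 1) / 2) • matG2
      + (-Complex.I * (B 0 0 - B 1 1) / 2) • (matG1 * matG2) := by
    rw [matG1_mul_matG2]
    ext i j; fin_cases i <;> fin_cases j <;> simp [matG1, matG2, matT] <;> ring_nf <;>
      simp [Complex.I_sq] <;> ring
  have h1 : matG1 ∈ Algebra.adjoin ℂ {matG1, matG2} := Algebra.subset_adjoin (by simp)
  have h2 : matG2 ∈ Algebra.adjoin ℂ {matG1, matG2} := Algebra.subset_adjoin (by simp)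
  rw [hB]
  exact add_mem (add_mem (add_mem (Subalgebra.smul_mem _ (one_mem _) _)
    (Subalgebra.smul_mem _ h1 _)) (Subalgebra.smul_mem _ h2 _))
    (Subalgebra.smul_mem _ (mul_mem h1 h2) _)

end TwoByTwo

section Kronecker

variable {m : ℕ}

lemma tprod_mul (M N : Fin m → Matrix (Fin 2) (Fin 2) ℂ) :
    tprod M * tprod N = tprod (M * N) := by
  ext a b
  simp only [tprod, Matrix.mul_apply, Matrix.of_apply, Pi.mul_apply]
  rw [Fintype.prod_sum fun ν j => M ν (a ν) j * N ν j (b ν)]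
  exact Finset.sum_congr rfl fun c _ => Finset.prod_mul_distrib.symm

lemma tprod_one : tprod (1 : Fin m → Matrix (Fin 2) (Fin 2) ℂ) = 1 := by
  ext a b
  simp only [tprod, Matrix.of_apply, Pi.one_apply, Matrix.one_apply]
  by_cases hab : a = b
  · simp [hab]
  · obtain ⟨ν, hν⟩ := Function.ne_iff.mp hab
    rw [if_neg hab]
    exact Finset.prod_eq_zero (Finset.mem_univ ν) (if_neg hν)

def tprodHom :
    (Fin m → Matrix (Fin 2) (Fin 2) ℂ) →* Matrix (Fin m → Fin 2) (Fin m → Fin 2) ℂ where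
  toFun := tprod
  map_one' := tprod_one
  map_mul' M N := (tprod_mul M N).symm

lemma tprod_mulSingle_apply (ν : Fin m) (B : Matrix (Fin 2) (Fin 2) ℂ) (a b : Fin m → Fin 2) :
    tprod (Pi.mulSingle ν B) a b
      = B (a ν) (b ν) * ∏ μ ∈ Finset.univ.erase ν, (1 : Matrix (Fin 2) (Fin 2) ℂ) (a μ) (b μ) := by
  rw [tprod, Matrix.of_apply, ← Finset.mul_prod_erase _ _ (Finset.mem_univ ν),
    Pi.mulSingle_eq_same]
  congr 1
  exact Finset.prod_congr rfl fun μ hμ => by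
    rw [Pi.mulSingle_eq_of_ne (Finset.ne_of_mem_erase hμ)]

def slot (ν : Fin m) :
    Matrix (Fin 2) (Fin 2) ℂ →ₐ[ℂ] Matrix (Fin m → Fin 2) (Fin m → Fin 2) ℂ :=
  AlgHom.ofLinearMap
    { toFun := fun B => tprod (Pi.mulSingle ν B)
      map_add' := fun B C => by ext a b; simp [tprod_mulSingle_apply, add_mul]
      map_smul' := fun c B => by ext a b; simp [tprod_mulSingle_apply, mul_assoc] }
    (by simp [tprod_one]) (fun B C => by simp [← Pi.mulSingle_mul, tprod_mul])

lemma slot_apply (ν : Fin m) (B : Matrix (Fin 2) (Fin 2) ℂ) :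
    slot ν B = tprod (Pi.mulSingle ν B) := rfl

lemma tprod_eq_neg_of_eq_neg {M N : Fin m → Matrix (Fin 2) (Fin 2) ℂ} (ν : Fin m)
    (hν : M ν = -N ν) (h : ∀ μ, μ ≠ ν → M μ = N μ) : tprod M = -tprod N := by
  have hM : M = N * Pi.mulSingle ν (-1) := by
    funext μ
    by_cases hμ : μ = ν
    · subst hμ; simp [hν]
    · simp [Pi.mulSingle_eq_of_ne hμ, h μ hμ]
  rw [hM, ← tprod_mul, ← slot_apply, map_neg, map_one, mul_neg, mul_one]

lemma single_one_eq_tprod (a b : Fin m → Fin 2) :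
    Matrix.single a b (1 : ℂ) = tprod fun ν => Matrix.single (a ν) (b ν) 1 := by
  ext x y
  simp only [tprod, Matrix.of_apply, Matrix.single_apply, Finset.prod_boole, Finset.mem_univ,
    true_implies, forall_and, funext_iff]

lemma tprod_mem_of_slot_mem {A : Subalgebra ℂ (Matrix (Fin m → Fin 2) (Fin m → Fin 2) ℂ)}
    (M : Fin m → Matrix (Fin 2) (Fin 2) ℂ) (h : ∀ ν, slot ν (M ν) ∈ A) : tprod M ∈ A :=
  Submonoid.pi_mem_of_mulSingle_mem (H := A.toSubmonoid.comap tprodHom) M h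

lemma eq_top_of_slot_mem {A : Subalgebra ℂ (Matrix (Fin m → Fin 2) (Fin m → Fin 2) ℂ)}
    (h : ∀ ν B, slot ν B ∈ A) : A = ⊤ := by
  refine Algebra.eq_top_iff.mpr fun X => ?_
  rw [Matrix.matrix_eq_sum_single X]
  refine Subalgebra.sum_mem _ fun a _ => Subalgebra.sum_mem _ fun b _ => ?_
  rw [← mul_one (X a b), ← smul_eq_mul, ← Matrix.smul_single, single_one_eq_tprod]
  exact Subalgebra.smul_mem _ (tprod_mem_of_slot_mem _ fun ν => h ν _) _

end Kronecker

section JordanWigner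

variable {m : ℕ}

/-- The factors of the Jordan–Wigner string `T ⊗ ⋯ ⊗ T ⊗ g ⊗ 1 ⊗ ⋯ ⊗ 1`. -/
def jwString (ν : Fin m) (g : Matrix (Fin 2) (Fin 2) ℂ) : Fin m → Matrix (Fin 2) (Fin 2) ℂ :=
  fun μ => if μ < ν then matT else if μ = ν then g else 1

lemma jwString_mul_same (ν : Fin m) (g g' : Matrix (Fin 2) (Fin 2) ℂ) :
    jwString ν g * jwString ν g' = Pi.mulSingle ν (g * g') := by
  funext μ
  rcases lt_trichotomy μ ν with h | rfl | h
  · simp [jwString, h, h.ne, matT_mul_self]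
  · simp [jwString]
  · simp [jwString, h.ne', not_lt.mpr h.le]

lemma tprod_jwString_anticomm_of_eq (ν : Fin m) {g g' : Matrix (Fin 2) (Fin 2) ℂ}
    (h : g * g' = -(g' * g)) :
    tprod (jwString ν g * jwString ν g') = -tprod (jwString ν g' * jwString ν g) := by
  rw [jwString_mul_same, jwString_mul_same, h, ← slot_apply, ← slot_apply, map_neg]

lemma tprod_jwString_anticomm_of_lt {ν ν' : Fin m} (hν : ν < ν')
    {g : Matrix (Fin 2) (Fin 2) ℂ} (h : g * matT = -(matT * g)) (g' : Matrix (Fin 2) (Fin 2) ℂ) :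
    tprod (jwString ν g * jwString ν' g') = -tprod (jwString ν' g' * jwString ν g) := by
  refine tprod_eq_neg_of_eq_neg ν (by simp [jwString, hν, h]) fun μ hμ => ?_
  simp only [jwString, Pi.mul_apply]
  split_ifs <;> first | simp | (exfalso; order)

end JordanWigner

section Phi

variable {n : ℕ}

/-- `Φ(e_{2ν})` and `Φ(e_{2ν+1})` act through the tensor factor `ν`. -/
def pairIndex (hn : Even n) (i : Fin n) : Fin (n / 2) :=
  ⟨i / 2, by obtain ⟨k, rfl⟩ := hn; omega⟩

def gen (i : ℕ) : Matrix (Fin 2) (Fin 2) ℂ := if i % 2 = 0 then matG1 else matG2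

variable {ε : Fin n → ℝ}

lemma gen_mul_self (i : ℕ) : gen i * gen i = -1 := by
  unfold gen; split_ifs
  exacts [matG1_mul_self, matG2_mul_self]

lemma gen_mul_matT (i : ℕ) : gen i * matT = -(matT * gen i) := by
  unfold gen; split_ifs
  exacts [matG1_mul_matT, matG2_mul_matT]

lemma tau_ne_zero (ε : Fin n → ℝ) (i : Fin n) : tau ε i ≠ 0 := by
  unfold tau; split_ifs <;> simp

lemma tau_mul_self {i : Fin n} (hε : ε i = 1 ∨ ε i = -1) : tau ε i * tau ε i = ε i := by
  rcases hε with h | h <;> norm_num [tau, h]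

lemma Phi_eq_smul_tprod_jwString (hn : Even n) (ε : Fin n → ℝ) (i : Fin n) :
    Phi ε i = tau ε i • tprod (jwString (pairIndex hn i) (gen i)) := by
  have hi : i.val < 2 * (n / 2) := by obtain ⟨k, rfl⟩ := hn; omega
  rw [Phi, if_pos hi]
  congr 2
  funext ν
  simp only [jwString, gen, pairIndex, Fin.lt_def, Fin.ext_iff, matE]

lemma Phi_mul_self (hn : Even n) {i : Fin n} (hε : ε i = 1 ∨ ε i = -1) :
    Phi ε i * Phi ε i = (-(ε i : ℂ)) • 1 := by
  rw [Phi_eq_smul_tprod_jwString hn, smul_mul_smul_comm, tprod_mul, jwString_mul_same, gen_mul_self,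
    ← slot_apply, map_neg, map_one, tau_mul_self hε, smul_neg, neg_smul]

lemma Phi_mul_Phi_of_lt (hn : Even n) (ε : Fin n → ℝ) {i j : Fin n} (hij : i < j) :
    Phi ε i * Phi ε j = -(Phi ε j * Phi ε i) := by
  have hanti : tprod (jwString (pairIndex hn i) (gen i) * jwString (pairIndex hn j) (gen j))
      = -tprod (jwString (pairIndex hn j) (gen j) * jwString (pairIndex hn i) (gen i)) := by
    rcases (Nat.div_le_div_right (c := 2) hij.le).lt_or_eq with hlt | heq
    · exact tprod_jwString_anticomm_of_lt hlt (gen_mul_matT i) _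
    · have hi : i.val % 2 = 0 := by omega
      have hj : j.val % 2 = 1 := by omega
      rw [show pairIndex hn i = pairIndex hn j from Fin.ext heq]
      refine tprod_jwString_anticomm_of_eq _ ?_
      simp [gen, hi, hj, matG2_mul_matG1]
  rw [Phi_eq_smul_tprod_jwString hn ε i, Phi_eq_smul_tprod_jwString hn ε j, smul_mul_smul_comm,
    smul_mul_smul_comm, tprod_mul, tprod_mul, hanti, smul_neg, mul_comm]

lemma Phi_mul_add_mul_swap (hn : Even n) (hε : ∀ i, ε i = 1 ∨ ε i = -1) (i j : Fin n) :
    Phi ε i * Phi ε j + Phi ε j * Phi ε i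
      = ((-2 : ℂ) * (if i = j then (ε i : ℂ) else 0)) •
          (1 : Matrix (Fin (n / 2) → Fin 2) (Fin (n / 2) → Fin 2) ℂ) := by
  rcases lt_trichotomy i j with h | rfl | h
  · simp [Phi_mul_Phi_of_lt hn ε h, h.ne]
  · rw [if_pos rfl, Phi_mul_self hn (hε i), ← add_smul]
    ring_nf
  · simp [Phi_mul_Phi_of_lt hn ε h, h.ne']

lemma cliffC_mul_self (hn : Even n) (hε : ∀ i, ε i = 1 ∨ ε i = -1) (x : Fin n → ℂ) :
    cliffC ε x * cliffC ε x = algebraMap ℂ _ (Qc ε x) := by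
  have hanti : ∀ i ∈ Finset.univ, ∀ j ∈ Finset.univ, i ≠ j →
      x i • Phi ε i * x j • Phi ε j + x j • Phi ε j * x i • Phi ε i = 0 := by
    intro i _ j _ hij
    rw [smul_mul_smul_comm, smul_mul_smul_comm, mul_comm (x j), ← smul_add,
      Phi_mul_add_mul_swap hn hε, if_neg hij, mul_zero, zero_smul, smul_zero]
  rw [cliffC, Finset.sum_mul_sum_self_of_anticomm _ _ hanti, Qc,
    QuadraticMap.weightedSumSquares_apply, map_sum]
  refine Finset.sum_congr rfl fun i _ => ?_
  rw [smul_mul_smul_comm, Phi_mul_self hn (hε i), smul_smul, Algebra.algebraMap_eq_smul_one,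
    smul_eq_mul, mul_comm]

end Phi

section Generation

variable {m : ℕ} {A : Subalgebra ℂ (Matrix (Fin m → Fin 2) (Fin m → Fin 2) ℂ)}

lemma slot_mem_of_matG1_matG2 (ν : Fin m) (h1 : slot ν matG1 ∈ A) (h2 : slot ν matG2 ∈ A)
    (B : Matrix (Fin 2) (Fin 2) ℂ) : slot ν B ∈ A := by
  have hle : Algebra.adjoin ℂ {matG1, matG2} ≤ A.comap (slot ν) :=
    Algebra.adjoin_le (by simp [Set.insert_subset_iff, h1, h2])
  exact hle (adjoin_matG1_matG2 ▸ Algebra.mem_top)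

lemma eq_top_of_tprod_jwString_mem (h1 : ∀ ν, tprod (jwString ν matG1) ∈ A)
    (h2 : ∀ ν, tprod (jwString ν matG2) ∈ A) : A = ⊤ := by
  have hT : ∀ ν, slot ν matT ∈ A := fun ν => by
    have h :
        tprod (jwString ν matG1) * tprod (jwString ν matG2) = -Complex.I • slot ν matT := by
      rw [tprod_mul, jwString_mul_same, matG1_mul_matG2, ← slot_apply, map_smul]
    have := A.smul_mem (A.mul_mem (h1 ν) (h2 ν)) Complex.I
    rwa [h, smul_smul, mul_neg, Complex.I_mul_I, neg_neg, one_smul] at this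
  have hstring : ∀ ν, tprod (jwString ν 1) ∈ A := fun ν =>
    tprod_mem_of_slot_mem _ fun μ => by
      unfold jwString; split_ifs
      exacts [hT μ, (map_one (slot μ)).symm ▸ A.one_mem, (map_one (slot μ)).symm ▸ A.one_mem]
  have hslot : ∀ ν g, tprod (jwString ν g) ∈ A → slot ν g ∈ A := fun ν g hg => by
    rw [slot_apply, ← one_mul g, ← jwString_mul_same, ← tprod_mul]
    exact A.mul_mem (hstring ν) hg
  exact eq_top_of_slot_mem fun ν =>
    slot_mem_of_matG1_matG2 ν (hslot ν _ (h1 ν)) (hslot ν _ (h2 ν))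

end Generation

lemma eq_top_of_Phi_mem {n : ℕ} (hn : Even n) {ε : Fin n → ℝ}
    {A : Subalgebra ℂ (Matrix (Fin (n / 2) → Fin 2) (Fin (n / 2) → Fin 2) ℂ)}
    (h : ∀ i, Phi ε i ∈ A) : A = ⊤ := by
  have hjw : ∀ i, tprod (jwString (pairIndex hn i) (gen i)) ∈ A := fun i => by
    have := A.smul_mem (h i) (tau ε i)⁻¹
    rwa [Phi_eq_smul_tprod_jwString hn, inv_smul_smul₀ (tau_ne_zero ε i)] at this
  have hν : ∀ ν : Fin (n / 2), 2 * ν.val + 1 < n := fun ν => by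
    obtain ⟨k, rfl⟩ := hn; omega
  refine eq_top_of_tprod_jwString_mem (fun ν => ?_) (fun ν => ?_)
  · convert hjw ⟨2 * ν, by have := hν ν; omega⟩ using 3
    · ext; simp [pairIndex]
    · simp [gen]
  · convert hjw ⟨2 * ν + 1, hν ν⟩ using 3
    · ext; simp [pairIndex]; omega
    · simp [gen]

lemma finrank_matrix_spinor {n : ℕ} (hn : Even n) :
    Module.finrank ℂ (Matrix (Fin (n / 2) → Fin 2) (Fin (n / 2) → Fin 2) ℂ) = 2 ^ n := by
  obtain ⟨k, rfl⟩ := hn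
  rw [Module.finrank_matrix, Module.finrank_self, mul_one, Fintype.card_fun, Fintype.card_fin,
    Fintype.card_fin, ← pow_add]
  congr 1; omega

theorem clifford_relations_and_iso_even_general
    (n m : ℕ) (hn : n = 2 * m)
    (ε : Fin n → ℝ) (hε : ∀ i, ε i = 1 ∨ ε i = -1) :
    (∀ i j : Fin n,
        Phi ε i * Phi ε j + Phi ε j * Phi ε i
          = ((-2 : ℂ) * (if i = j then (ε i : ℂ) else 0)) •
              (1 : Matrix (Fin (n / 2) → Fin 2) (Fin (n / 2) → Fin 2) ℂ)) ∧
    ∃ F : CliffordAlgebra (Qc ε) →ₐ[ℂ]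
        Matrix (Fin (n / 2) → Fin 2) (Fin (n / 2) → Fin 2) ℂ,
      (∀ x : Fin n → ℂ, F (CliffordAlgebra.ι (Qc ε) x) = cliffC ε x) ∧
      Function.Bijective F := by
  have hev : Even n := ⟨m, by omega⟩
  refine ⟨Phi_mul_add_mul_swap hev hε, ?_⟩
  let F := CliffordAlgebra.lift (Qc ε)
    ⟨Fintype.linearCombination ℂ (Phi ε), cliffC_mul_self hev hε⟩
  have hF : ∀ x, F (CliffordAlgebra.ι (Qc ε) x) = cliffC ε x :=
    CliffordAlgebra.lift_ι_apply _ _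
  have hsurj : Function.Surjective F := (AlgHom.range_eq_top F).mp <|
    eq_top_of_Phi_mem hev (ε := ε) fun i =>
      ⟨CliffordAlgebra.ι (Qc ε) (Pi.single i 1), by simp [hF, cliffC, Pi.single_apply]⟩
  have hdim : Module.finrank ℂ (CliffordAlgebra (Qc ε))
      = Module.finrank ℂ (Matrix (Fin (n / 2) → Fin 2) (Fin (n / 2) → Fin 2) ℂ) := by
    rw [CliffordAlgebra.finrank_eq_two_pow, Module.finrank_fin_fun, finrank_matrix_spinor hev]
  exact ⟨F, hF, (LinearMap.injective_iff_surjective_of_finrank_eq_finrank hdim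
    (f := F.toLinearMap)).mpr hsurj, hsurj⟩

theorem clifford_relations_and_iso_even
    (n m p : ℕ) (hn : n = 2 * m)
    (ε : Fin n → ℝ) (hε : ∀ i, ε i = 1 ∨ ε i = -1)
    (hp : (negSet ε).card = p) :
    (∀ i j : Fin n,
        Phi ε i * Phi ε j + Phi ε j * Phi ε i
          = ((-2 : ℂ) * (if i = j then (ε i : ℂ) else 0)) •
              (1 : Matrix (Fin (n / 2) → Fin 2) (Fin (n / 2) → Fin 2) ℂ)) ∧
    ∃ F : CliffordAlgebra (Qc ε) →ₐ[ℂ]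
        Matrix (Fin (n / 2) → Fin 2) (Fin (n / 2) → Fin 2) ℂ,
      (∀ x : Fin n → ℂ, F (CliffordAlgebra.ι (Qc ε) x) = cliffC ε x) ∧
      Function.Bijective F :=
  clifford_relations_and_iso_even_general n m hn ε hε

end Paper
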